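/- (Consistency of the Hull–White model with the manifold 𝒢^λ of exponentially extended Nelson–Siegel curves.) Fix a > 0, λ > 0, σ ∈ ℝ. For every β = (β₁,β₂,β₃,β₄,β₅) ∈ ℝ⁵: (i) [drift condition] there exist A, B, C, D, E ∈ ℝ such that for all τ ≥ 0, −a·β₁·exp(−aτ) − 2a·β₂·exp(−2aτ) + (β₅ − β₄λ)·exp(−λτ) − β₅·λ·τ·exp(−λτ) + (σ²/a)·exp(−aτ)·(1 − exp(−aτ)) = A·exp(−aτ) + B·exp(−2aτ) + C + D·exp(−λτ) + E·τ·exp(−λτ); and (ii) [volatility condition] there exist A, B, C, D, E ∈ ℝ such that for all τ ≥ 0, σ·exp(−aτ) = A·exp(−aτ) + B·exp(−2aτ) + C + D·exp(−λτ) + E·τ·exp(−λτ). Equivalently, the function ∂G^λ/∂τ(·;β) + (σ²/a)·exp(−a·)·(1 − exp(−a·)) and the function σ·exp(−a·) both lie in the real span of the functions exp(−aτ), exp(−2aτ), 1, exp(−λτ), τ·exp(−λτ) on [0,∞). -/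

import Mathlib

lemma Real.exp_neg_two_mul_mul (a τ : ℝ) :
    Real.exp (-(2 * a) * τ) = Real.exp (-a * τ) ^ 2 := by
  rw [sq, ← Real.exp_add]
  ring_nf

theorem hullWhite_consistency_general (a lam σ : ℝ) :
    ∀ β₁ β₂ β₃ β₄ β₅ : ℝ,
      (∃ A B C D E : ℝ, ∀ τ ≥ (0 : ℝ),
        -a * β₁ * Real.exp (-a * τ) - 2 * a * β₂ * Real.exp (-(2 * a) * τ)
            + (β₅ - β₄ * lam) * Real.exp (-lam * τ) - β₅ * lam * τ * Real.exp (-lam * τ)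
            + σ ^ 2 / a * Real.exp (-a * τ) * (1 - Real.exp (-a * τ))
          = A * Real.exp (-a * τ) + B * Real.exp (-(2 * a) * τ) + C
            + D * Real.exp (-lam * τ) + E * τ * Real.exp (-lam * τ)) ∧
      (∃ A B C D E : ℝ, ∀ τ ≥ (0 : ℝ),
        σ * Real.exp (-a * τ)
          = A * Real.exp (-a * τ) + B * Real.exp (-(2 * a) * τ) + C
            + D * Real.exp (-lam * τ) + E * τ * Real.exp (-lam * τ)) := by
  intro β₁ β₂ β₃ β₄ β₅
  -- The drift splits as (σ²/a)·e^{-aτ} − (σ²/a)·e^{-2aτ}, so it shifts only the first two coordinates.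
  refine ⟨⟨-a * β₁ + σ ^ 2 / a, -2 * a * β₂ - σ ^ 2 / a, 0, β₅ - β₄ * lam, -(β₅ * lam),
      fun τ _ => ?_⟩, ⟨σ, 0, 0, 0, 0, fun τ _ => by ring⟩⟩
  rw [Real.exp_neg_two_mul_mul]
  ring

/-- Björk–Christensen consistency of the Hull–White model with the manifold of
exponentially extended Nelson–Siegel curves: drift and volatility conditions. -/
theorem hullWhite_consistency (a lam σ : ℝ) (ha : 0 < a) (hlam : 0 < lam) :
    ∀ β₁ β₂ β₃ β₄ β₅ : ℝ,
      (∃ A B C D E : ℝ, ∀ τ ≥ (0 : ℝ),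
        -a * β₁ * Real.exp (-a * τ) - 2 * a * β₂ * Real.exp (-(2 * a) * τ)
            + (β₅ - β₄ * lam) * Real.exp (-lam * τ) - β₅ * lam * τ * Real.exp (-lam * τ)
            + σ ^ 2 / a * Real.exp (-a * τ) * (1 - Real.exp (-a * τ))
          = A * Real.exp (-a * τ) + B * Real.exp (-(2 * a) * τ) + C
            + D * Real.exp (-lam * τ) + E * τ * Real.exp (-lam * τ)) ∧
      (∃ A B C D E : ℝ, ∀ τ ≥ (0 : ℝ),
        σ * Real.exp (-a * τ)
          = A * Real.exp (-a * τ) + B * Real.exp (-(2 * a) * τ) + C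
            + D * Real.exp (-lam * τ) + E * τ * Real.exp (-lam * τ)) :=
  hullWhite_consistency_general a lam σ
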